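/- arXiv:2201.13364 — 7 statements merged into one kernel-verified Lean document; each statement's English description precedes it below -/
import Mathlib

section
/- Let R be a unique factorization domain and S ⊆ R a multiplicative submonoid with 0 ∉ S, and let L be a localization of R at S with localization map φ : R → L. Then every unit u of L can be written as u = φ(v) · φ(p₁)^{k₁} ⋯ φ(p_r)^{k_r}, where v is a unit of R, each p_j is a prime element of R that divides some element of S (so that φ(p_j) is a unit of L and its integer powers are well defined), and k₁, …, k_r are integers. -/
/-!
Writing `u = φ(a) / φ(s)` with `a ∈ R`, `s ∈ S`, it suffices to show that every unit of `L`
of the form `φ(a)` lies in the subgroup of `Lˣ` generated by `φ(Rˣ)` and the units `φ(p)`,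
`p` prime. This follows by induction on the prime factorisation of `a`: if `φ(p a)` is a unit,
so are `φ(p)` and `φ(a)`. A prime `p` with `φ(p)` invertible divides an element of `S`.
-/

theorem Subgroup.exists_fin_of_mem_closure_range {G ι : Type*} [CommGroup G] {f : ι → G} {x : G}
    (hx : x ∈ closure (Set.range f)) :
    ∃ (r : ℕ) (i : Fin r → ι) (k : Fin r → ℤ), x = ∏ j, f (i j) ^ k j := by
  obtain ⟨a, rfl⟩ := exists_finsupp_of_mem_closure_range f x hx
  let e := a.support.equivFin
  refine ⟨_, fun j => e.symm j, fun j => a (e.symm j), ?_⟩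
  rw [Finsupp.prod, ← Finset.prod_coe_sort, ← e.symm.prod_comp]

section

variable (R L : Type*) [CommRing R] [CommRing L] [Algebra R L]

def InvertiblePrime : Type _ := {p : R // Prime p ∧ IsUnit (algebraMap R L p)}

variable {R L}

noncomputable def InvertiblePrime.toUnit (p : InvertiblePrime R L) : Lˣ := p.2.2.unit

theorem InvertiblePrime.val_toUnit (p : InvertiblePrime R L) :
    (p.toUnit : L) = algebraMap R L p.1 :=
  p.2.2.unit_spec

variable (R L)

def primeUnitSubgroup : Subgroup Lˣ :=
  (Units.map (algebraMap R L : R →* L)).range ⊔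
    Subgroup.closure (Set.range (InvertiblePrime.toUnit (R := R) (L := L)))

variable {R L}

theorem mem_primeUnitSubgroup_of_val_eq_algebraMap [IsDomain R] [UniqueFactorizationMonoid R]
    (a : R) {x : Lˣ} (hx : (x : L) = algebraMap R L a) : x ∈ primeUnitSubgroup R L := by
  induction a using UniqueFactorizationMonoid.induction_on_prime generalizing x with
  | h₁ =>
    have h10 : (1 : L) = 0 := by rw [← x.inv_mul, hx, map_zero, mul_zero]
    rw [show x = 1 from Units.ext (by rw [hx, map_zero, Units.val_one, h10])]
    exact one_mem _
  | h₂ a ha =>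
    refine Subgroup.mem_sup_left ⟨ha.unit, Units.ext ?_⟩
    rw [hx, Units.coe_map, IsUnit.unit_spec]
    rfl
  | h₃ a p _ hp ih =>
    rw [map_mul] at hx
    let q : InvertiblePrime R L := ⟨p, hp, isUnit_of_mul_isUnit_left (hx ▸ x.isUnit)⟩
    have hxq : ((q.toUnit⁻¹ * x : Lˣ) : L) = algebraMap R L a := by
      rw [Units.val_mul, Units.inv_mul_eq_iff_eq_mul, hx, q.val_toUnit]
    rw [← mul_inv_cancel_left q.toUnit x]
    exact mul_mem (Subgroup.mem_sup_right (Subgroup.subset_closure ⟨q, rfl⟩)) (ih hxq)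

theorem mem_primeUnitSubgroup [IsDomain R] [UniqueFactorizationMonoid R] (S : Submonoid R)
    [IsLocalization S L] (u : Lˣ) :
    u ∈ primeUnitSubgroup R L := by
  obtain ⟨⟨a, s⟩, hu⟩ := IsLocalization.surj S (u : L)
  let t := (IsLocalization.map_units L s).unit
  have ht : (t : L) = algebraMap R L s := IsUnit.unit_spec _
  have hut : ((u * t : Lˣ) : L) = algebraMap R L a := by rw [Units.val_mul, ht, hu]
  rw [← mul_inv_cancel_right u t]
  exact mul_mem (mem_primeUnitSubgroup_of_val_eq_algebraMap a hut)
    (inv_mem (mem_primeUnitSubgroup_of_val_eq_algebraMap (s : R) ht))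

end

theorem units_of_localization_of_UFD_general {R L : Type*} [CommRing R] [IsDomain R]
    [UniqueFactorizationMonoid R] (S : Submonoid R)
    [CommRing L] [Algebra R L] [IsLocalization S L] (u : Lˣ) :
    ∃ (r : ℕ) (v : Rˣ) (p : Fin r → R) (k : Fin r → ℤ) (w : Fin r → Lˣ),
      (∀ j, Prime (p j)) ∧
      (∀ j, ∃ s ∈ S, p j ∣ s) ∧
      (∀ j, (w j : L) = algebraMap R L (p j)) ∧
      (u : L) = algebraMap R L (v : R) * ∏ j, ((w j ^ k j : Lˣ) : L) := by
  obtain ⟨_, ⟨v, rfl⟩, z, hz, rfl⟩ := Subgroup.mem_sup.1 (mem_primeUnitSubgroup S u)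
  obtain ⟨r, q, k, rfl⟩ := Subgroup.exists_fin_of_mem_closure_range hz
  refine ⟨r, v, fun j => (q j).1, k, fun j => (q j).toUnit, fun j => (q j).2.1,
    fun j => (IsLocalization.algebraMap_isUnit_iff S).1 (q j).2.2, fun j => (q j).val_toUnit, ?_⟩
  rw [Units.val_mul, Units.coe_map, Units.coe_prod]
  rfl

/-- **Units of a localization of a UFD.**
If `R` is a unique factorization domain, `S ⊆ R` a multiplicative submonoid with `0 ∉ S`,
and `L` a localization of `R` at `S` with localization map `φ = algebraMap R L`, then every
unit `u` of `L` is of the form `φ(v) · φ(p₁)^{k₁} ⋯ φ(p_r)^{k_r}` with `v ∈ Rˣ`, the `p_j`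
prime elements of `R` dividing some element of `S`, and `k_j ∈ ℤ` (integer powers being
taken in `Lˣ` via units `w j` over `φ(p_j)`). -/
theorem units_of_localization_of_UFD {R L : Type*} [CommRing R] [IsDomain R]
    [UniqueFactorizationMonoid R] (S : Submonoid R) (hS : (0 : R) ∉ S)
    [CommRing L] [Algebra R L] [IsLocalization S L] (u : Lˣ) :
    ∃ (r : ℕ) (v : Rˣ) (p : Fin r → R) (k : Fin r → ℤ) (w : Fin r → Lˣ),
      (∀ j, Prime (p j)) ∧
      (∀ j, ∃ s ∈ S, p j ∣ s) ∧
      (∀ j, (w j : L) = algebraMap R L (p j)) ∧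
      (u : L) = algebraMap R L (v : R) * ∏ j, ((w j ^ k j : Lˣ) : L) :=
  units_of_localization_of_UFD_general S u
end

section
/- Let p ∈ ℤ[t] be a non-zero polynomial with non-negative coefficients, S the multiplicative submonoid of ℤ[t] generated by t and p, and L a localization of ℤ[t] at S with localization map φ. If r ∈ L is bounded, then there exist q ∈ ℤ[t] and k ∈ ℕ such that r · φ(p)^k = φ(q); that is, every bounded element of L ≅ ℤ[t, t⁻¹, p(t)⁻¹] already lies in the subring φ(ℤ[t])[φ(p)⁻¹] ≅ ℤ[t, p(t)⁻¹]. -/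
open Polynomial

/-!
Below degree `ℓ` every coefficient of `X ^ ℓ * p ^ k` vanishes, and the coefficientwise bound
forces the same coefficients of `q` to vanish, so `q = X ^ ℓ * q'`. Since `X` is inverted in `L`,
the factor `X ^ ℓ` cancels from `r * φ (X ^ ℓ * p ^ k) = φ (X ^ ℓ * q')`.
-/

namespace Polynomial

variable {R : Type*}

theorem X_pow_dvd_of_support_subset [Semiring R] {n : ℕ} {f g : R[X]}
    (hfg : f.support ⊆ g.support) (hg : X ^ n ∣ g) : X ^ n ∣ f := by
  rw [X_pow_dvd_iff] at hg ⊢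
  intro d hd
  by_contra hf
  exact mem_support_iff.mp (hfg (mem_support_iff.mpr hf)) (hg d hd)

theorem support_subset_of_coeff_bounded [Ring R] [PartialOrder R] {f g : R[X]} {m : R}
    (hfg : ∀ i, -(m * g.coeff i) ≤ f.coeff i ∧ f.coeff i ≤ m * g.coeff i) :
    f.support ⊆ g.support := by
  intro i hi
  rw [mem_support_iff] at hi ⊢
  intro hg
  obtain ⟨hlo, hhi⟩ := hfg i
  simp only [hg, mul_zero, neg_zero] at hlo hhi
  exact hi (le_antisymm hhi hlo)

end Polynomial

theorem IsLocalization.mul_algebraMap_eq_of_mul_left_mem {R L : Type*} [CommSemiring R]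
    [CommSemiring L] [Algebra R L] (M : Submonoid R) [IsLocalization M L] {r : L} {s a b : R}
    (hs : s ∈ M) (h : r * algebraMap R L (s * a) = algebraMap R L (s * b)) :
    r * algebraMap R L a = algebraMap R L b := by
  apply (IsLocalization.map_units L ⟨s, hs⟩).mul_left_cancel
  rw [map_mul, map_mul, mul_left_comm] at h
  exact h

theorem bounded_mem_int_poly_loc_general (p : ℤ[X])
    (S : Submonoid ℤ[X]) (hS : S = Submonoid.closure {X, p})
    (L : Type*) [CommRing L] [Algebra ℤ[X] L] [IsLocalization S L]
    (r : L)
    (hr : ∃ (m ℓ k : ℕ) (q : ℤ[X]),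
        r * algebraMap ℤ[X] L (X ^ ℓ * p ^ k) = algebraMap ℤ[X] L q ∧
        ∀ i : ℕ, -((m : ℤ) * (X ^ ℓ * p ^ k).coeff i) ≤ q.coeff i ∧
          q.coeff i ≤ (m : ℤ) * (X ^ ℓ * p ^ k).coeff i) :
    ∃ (q : ℤ[X]) (k : ℕ),
      r * (algebraMap ℤ[X] L p) ^ k = algebraMap ℤ[X] L q := by
  obtain ⟨m, ℓ, k, q, heq, hbound⟩ := hr
  obtain ⟨q', rfl⟩ :=
    X_pow_dvd_of_support_subset (support_subset_of_coeff_bounded hbound) (dvd_mul_right _ _)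
  have hX : X ∈ S := hS ▸ Submonoid.subset_closure (Set.mem_insert _ _)
  refine ⟨q', k, ?_⟩
  rw [← map_pow]
  exact IsLocalization.mul_algebraMap_eq_of_mul_left_mem S (pow_mem hX ℓ) heq

/-- Every bounded element of `ℤ[t, t⁻¹, p(t)⁻¹]` lies in `ℤ[t, p(t)⁻¹]`. -/
theorem bounded_mem_int_poly_loc (p : ℤ[X]) (hp0 : p ≠ 0) (hpc : ∀ i, 0 ≤ p.coeff i)
    (S : Submonoid ℤ[X]) (hS : S = Submonoid.closure {X, p})
    (L : Type*) [CommRing L] [Algebra ℤ[X] L] [IsLocalization S L]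
    (r : L)
    (hr : ∃ (m ℓ k : ℕ) (q : ℤ[X]),
        r * algebraMap ℤ[X] L (X ^ ℓ * p ^ k) = algebraMap ℤ[X] L q ∧
        ∀ i : ℕ, -((m : ℤ) * (X ^ ℓ * p ^ k).coeff i) ≤ q.coeff i ∧
          q.coeff i ≤ (m : ℤ) * (X ^ ℓ * p ^ k).coeff i) :
    ∃ (q : ℤ[X]) (k : ℕ),
      r * (algebraMap ℤ[X] L p) ^ k = algebraMap ℤ[X] L q :=
  bounded_mem_int_poly_loc_general p S hS L r hr
end

section
/- Let p ∈ ℤ[t] be a non-zero polynomial with non-negative coefficients, S the multiplicative submonoid of ℤ[t] generated by t and p, and L a localization of ℤ[t] at S with localization map φ. An element r ∈ L is bounded if and only if there exist k ∈ ℕ and q ∈ ℤ[t] such that r · φ(p)^k = φ(q) and the support of q is contained in the support of p^k (i.e. q.coeff i = 0 whenever (p^k).coeff i = 0). -/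
/-!
If `|q| ≤ m · t^ℓ p^k` coefficientwise, then `q` vanishes wherever `t^ℓ p^k` does; in
particular `t^ℓ ∣ q`, and since `t` is a unit in `L` the factor `t^ℓ` can be cancelled.
Conversely, if `q` is supported in the support of `p^k`, whose coefficients are non-negative
integers and hence at least `1` on that support, then `m = max_i |q_i|` bounds `q` by `m · p^k`.
-/

open Polynomial

namespace Polynomial

section OrderedSemiring

variable {R : Type*} [Semiring R] [PartialOrder R] [IsOrderedRing R] {f g : R[X]}

theorem coeff_mul_nonneg (hf : ∀ i, 0 ≤ f.coeff i) (hg : ∀ i, 0 ≤ g.coeff i) (i : ℕ) :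
    0 ≤ (f * g).coeff i := by
  rw [coeff_mul]
  exact Finset.sum_nonneg fun x _ => mul_nonneg (hf x.1) (hg x.2)

theorem coeff_pow_nonneg (hf : ∀ i, 0 ≤ f.coeff i) (k i : ℕ) : 0 ≤ (f ^ k).coeff i := by
  induction k generalizing i with
  | zero => rw [pow_zero, coeff_one]; split_ifs <;> simp
  | succ k ih => rw [pow_succ]; exact coeff_mul_nonneg ih hf i

end OrderedSemiring

theorem exists_eq_X_pow_mul_of_support_subset {R : Type*} [Semiring R] {f q : R[X]} {ℓ : ℕ}
    (h : ∀ i, (X ^ ℓ * f).coeff i = 0 → q.coeff i = 0) :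
    ∃ q', q = X ^ ℓ * q' ∧ ∀ i, f.coeff i = 0 → q'.coeff i = 0 := by
  obtain ⟨q', rfl⟩ : X ^ ℓ ∣ q := X_pow_dvd_iff.mpr fun d hd =>
    h d (by simp [coeff_X_pow_mul', Nat.not_le.mpr hd])
  refine ⟨q', rfl, fun i hi => ?_⟩
  simpa only [coeff_X_pow_mul] using h (i + ℓ) (by rwa [coeff_X_pow_mul])

theorem exists_natAbs_coeff_le (q : ℤ[X]) : ∃ m : ℕ, ∀ i, (q.coeff i).natAbs ≤ m := by
  refine ⟨q.support.sup fun j => (q.coeff j).natAbs, fun i => ?_⟩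
  by_cases hi : i ∈ q.support
  · exact Finset.le_sup (f := fun j => (q.coeff j).natAbs) hi
  · simp [notMem_support_iff.mp hi]

theorem exists_abs_coeff_le_mul_of_support_subset {c q : ℤ[X]} (hc : ∀ i, 0 ≤ c.coeff i)
    (h : ∀ i, c.coeff i = 0 → q.coeff i = 0) : ∃ m : ℕ, ∀ i, |q.coeff i| ≤ m * c.coeff i := by
  obtain ⟨m, hm⟩ := exists_natAbs_coeff_le q
  refine ⟨m, fun i => ?_⟩
  rcases (hc i).eq_or_lt with hci | hci
  · simp [h i hci.symm, ← hci]
  · calc |q.coeff i| ≤ m := by rw [Int.abs_eq_natAbs]; exact_mod_cast hm i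
      _ ≤ m * c.coeff i := le_mul_of_one_le_right (by positivity) hci

end Polynomial

theorem bounded_iff_support_subset_general (p : ℤ[X]) (hpc : ∀ i, 0 ≤ p.coeff i)
    (S : Submonoid ℤ[X]) (hS : S = Submonoid.closure {X, p})
    (L : Type*) [CommRing L] [Algebra ℤ[X] L] [IsLocalization S L]
    (r : L) :
    (∃ (m ℓ k : ℕ) (q : ℤ[X]),
        r * algebraMap ℤ[X] L (X ^ ℓ * p ^ k) = algebraMap ℤ[X] L q ∧
        ∀ i : ℕ, -((m : ℤ) * (X ^ ℓ * p ^ k).coeff i) ≤ q.coeff i ∧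
          q.coeff i ≤ (m : ℤ) * (X ^ ℓ * p ^ k).coeff i) ↔
    (∃ (k : ℕ) (q : ℤ[X]),
        r * (algebraMap ℤ[X] L p) ^ k = algebraMap ℤ[X] L q ∧
        ∀ i : ℕ, (p ^ k).coeff i = 0 → q.coeff i = 0) := by
  constructor
  · rintro ⟨m, ℓ, k, q, heq, hbd⟩
    have hzero : ∀ i, (X ^ ℓ * p ^ k).coeff i = 0 → q.coeff i = 0 := fun i hi => by
      have := hbd i
      rw [hi, mul_zero] at this
      omega
    obtain ⟨q', rfl, hq'⟩ := exists_eq_X_pow_mul_of_support_subset hzero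
    have hXS : (X : ℤ[X]) ^ ℓ ∈ S := hS ▸ pow_mem (Submonoid.subset_closure (by simp)) ℓ
    have hXunit : IsUnit (algebraMap ℤ[X] L (X ^ ℓ)) := IsLocalization.map_units L ⟨_, hXS⟩
    refine ⟨k, q', hXunit.mul_left_cancel ?_, hq'⟩
    simp only [map_mul, map_pow] at heq ⊢
    linear_combination heq
  · rintro ⟨k, q, heq, hsupp⟩
    obtain ⟨m, hm⟩ := exists_abs_coeff_le_mul_of_support_subset (coeff_pow_nonneg hpc k) hsupp
    exact ⟨m, 0, k, q, by simpa using heq, fun i => by simpa using abs_le.mp (hm i)⟩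

/-- An element `r` of `ℤ[t, t⁻¹, p(t)⁻¹]` is bounded if and only if there are `k ∈ ℕ`
and `q ∈ ℤ[t]` with `r · φ(p)^k = φ(q)` and the support of `q` contained in the
support of `p^k`. -/
theorem bounded_iff_support_subset (p : ℤ[X]) (hp0 : p ≠ 0) (hpc : ∀ i, 0 ≤ p.coeff i)
    (S : Submonoid ℤ[X]) (hS : S = Submonoid.closure {X, p})
    (L : Type*) [CommRing L] [Algebra ℤ[X] L] [IsLocalization S L]
    (r : L) :
    (∃ (m ℓ k : ℕ) (q : ℤ[X]),
        r * algebraMap ℤ[X] L (X ^ ℓ * p ^ k) = algebraMap ℤ[X] L q ∧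
        ∀ i : ℕ, -((m : ℤ) * (X ^ ℓ * p ^ k).coeff i) ≤ q.coeff i ∧
          q.coeff i ≤ (m : ℤ) * (X ^ ℓ * p ^ k).coeff i) ↔
    (∃ (k : ℕ) (q : ℤ[X]),
        r * (algebraMap ℤ[X] L p) ^ k = algebraMap ℤ[X] L q ∧
        ∀ i : ℕ, (p ^ k).coeff i = 0 → q.coeff i = 0) :=
  bounded_iff_support_subset_general p hpc S hS L r
end

section
/- Let p ∈ ℕ[t] be a polynomial of degree d ≥ 1 with non-zero constant coefficient. Then there exists N ∈ ℕ, N ≥ 1, such that p^N has large middle coefficients; that is, p^N has non-zero constant coefficient, non-zero leading coefficient (of degree N·d), and the coefficient of t^j in p^N is different from 1 for every j with 0 < j < N·d. -/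
/-!
Take `N = d`. A coefficient of `p ^ d` counts, with positive weights, the ordered ways of writing
its exponent `j` as a sum `i₁ + ⋯ + i_d` of exponents in the support of `p`. If some such way uses
two different exponents, moving either of them to the front gives two different contributions to
`p * p ^ (d - 1)`. Otherwise `j = d * a` with `0 < a < d`, and `0`, followed by `a` copies of `d`
and `d - 1 - a` copies of `0`, is a decomposition with a different first term, available because
`p` has both a constant and a degree-`d` term.
-/

open Polynomial

namespace Polynomial

section NoCancellation

variable {R : Type*} [Semiring R] [NoZeroDivisors R] [Subsingleton (AddUnits R)]

theorem coeff_mul_ne_zero_iff {q r : R[X]} {n : ℕ} :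
    (q * r).coeff n ≠ 0 ↔ ∃ i k, i + k = n ∧ q.coeff i ≠ 0 ∧ r.coeff k ≠ 0 := by
  simp only [coeff_mul, ne_eq, Finset.sum_eq_zero_iff, not_forall, mul_eq_zero, not_or,
    Finset.HasAntidiagonal.mem_antidiagonal, Prod.exists, exists_prop]

variable [Nontrivial R]

theorem coeff_pow_ne_zero_iff {p : R[X]} {n j : ℕ} :
    (p ^ n).coeff j ≠ 0 ↔
      ∃ s : Multiset ℕ, Multiset.card s = n ∧ s.sum = j ∧ ∀ i ∈ s, p.coeff i ≠ 0 := by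
  induction n generalizing j with
  | zero => simp [coeff_one, eq_comm]
  | succ n ih =>
    rw [pow_succ', coeff_mul_ne_zero_iff]
    constructor
    · rintro ⟨i, k, rfl, hi, hk⟩
      obtain ⟨s, rfl, rfl, hs⟩ := ih.mp hk
      refine ⟨i ::ₘ s, by simp, by simp, ?_⟩
      simpa [hi] using hs
    · rintro ⟨s, hcard, rfl, hs⟩
      obtain ⟨i, t, rfl, rfl⟩ := Multiset.card_eq_succ_iff.mp hcard
      simp only [Multiset.mem_cons, forall_eq_or_imp] at hs
      exact ⟨i, t.sum, by simp, hs.1, ih.mpr ⟨t, rfl, rfl, hs.2⟩⟩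

theorem coeff_pow_mul_ne_zero {p : R[X]} {i : ℕ} (h : p.coeff i ≠ 0) (n : ℕ) :
    (p ^ n).coeff (n * i) ≠ 0 :=
  coeff_pow_ne_zero_iff.mpr ⟨Multiset.replicate n i, by simp, by simp,
    fun _ hj => Multiset.eq_of_mem_replicate hj ▸ h⟩

end NoCancellation

theorem one_lt_coeff_mul {q r : ℕ[X]} {i₁ k₁ i₂ k₂ : ℕ} (hi : i₁ ≠ i₂) (h : i₁ + k₁ = i₂ + k₂)
    (hq₁ : q.coeff i₁ ≠ 0) (hr₁ : r.coeff k₁ ≠ 0) (hq₂ : q.coeff i₂ ≠ 0) (hr₂ : r.coeff k₂ ≠ 0) :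
    1 < (q * r).coeff (i₁ + k₁) := by
  have hsub : {(i₁, k₁), (i₂, k₂)} ⊆ Finset.HasAntidiagonal.antidiagonal (i₁ + k₁) := by
    simp [Finset.insert_subset_iff, h]
  have h₁ := Nat.pos_of_ne_zero (mul_ne_zero hq₁ hr₁)
  have h₂ := Nat.pos_of_ne_zero (mul_ne_zero hq₂ hr₂)
  calc 1 < q.coeff i₁ * r.coeff k₁ + q.coeff i₂ * r.coeff k₂ := by omega
    _ = ∑ x ∈ {(i₁, k₁), (i₂, k₂)}, q.coeff x.1 * r.coeff x.2 := by
        rw [Finset.sum_pair (by simp [hi])]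
    _ ≤ (q * r).coeff (i₁ + k₁) := by
        rw [coeff_mul]
        exact Finset.sum_le_sum_of_subset hsub

theorem one_lt_coeff_pow_succ {p : ℕ[X]} {n i₁ i₂ : ℕ} {s₁ s₂ : Multiset ℕ} (hi : i₁ ≠ i₂)
    (hsum : i₁ + s₁.sum = i₂ + s₂.sum) (hcard₁ : Multiset.card s₁ = n)
    (hcard₂ : Multiset.card s₂ = n) (h₁ : ∀ i ∈ i₁ ::ₘ s₁, p.coeff i ≠ 0)
    (h₂ : ∀ i ∈ i₂ ::ₘ s₂, p.coeff i ≠ 0) :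
    1 < (p ^ (n + 1)).coeff (i₁ + s₁.sum) := by
  simp only [Multiset.mem_cons, forall_eq_or_imp] at h₁ h₂
  rw [pow_succ']
  exact one_lt_coeff_mul hi hsum h₁.1 (coeff_pow_ne_zero_iff.mpr ⟨s₁, hcard₁, rfl, h₁.2⟩)
    h₂.1 (coeff_pow_ne_zero_iff.mpr ⟨s₂, hcard₂, rfl, h₂.2⟩)

theorem coeff_pow_ne_one {p : ℕ[X]} {d j : ℕ} (h0 : p.coeff 0 ≠ 0) (hd : p.coeff d ≠ 0)
    (hj0 : 0 < j) (hjd : j < d * d) : (p ^ d).coeff j ≠ 1 := by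
  intro h1
  obtain ⟨s, hcard, rfl, hs⟩ := coeff_pow_ne_zero_iff.mp (h1 ▸ one_ne_zero)
  obtain ⟨m, rfl⟩ : ∃ m, d = m + 1 := Nat.exists_eq_add_one_of_ne_zero (by rintro rfl; simp at hjd)
  obtain ⟨a, ha⟩ := Multiset.card_pos_iff_exists_mem.mp (by rw [hcard]; exact m.succ_pos)
  have hsa := Multiset.sum_erase ha
  suffices ∃ b t, b ≠ a ∧ b + Multiset.sum t = s.sum ∧ Multiset.card t = m ∧
      ∀ i ∈ b ::ₘ t, p.coeff i ≠ 0 by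
    obtain ⟨b, t, hba, hbt, hcardt, ht⟩ := this
    have := one_lt_coeff_pow_succ hba.symm (hsa.trans hbt.symm)
      (by simp [Multiset.card_erase_of_mem ha, hcard]) hcardt (by rwa [Multiset.cons_erase ha]) ht
    rw [hsa, h1] at this
    exact this.false
  by_cases hconst : ∃ b ∈ s, b ≠ a
  · obtain ⟨b, hb, hba⟩ := hconst
    exact ⟨b, s.erase b, hba, Multiset.sum_erase hb,
      by simp [Multiset.card_erase_of_mem hb, hcard], by rwa [Multiset.cons_erase hb]⟩
  · obtain rfl : s = Multiset.replicate (m + 1) a :=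
      Multiset.eq_replicate.mpr ⟨hcard, fun b hb => by_contra fun hba => hconst ⟨b, hb, hba⟩⟩
    simp only [Multiset.sum_replicate, smul_eq_mul] at hj0 hjd ⊢
    have ha0 : 0 < a := Nat.pos_of_mul_pos_left hj0
    have ham : a ≤ m := Nat.le_of_lt_succ (Nat.lt_of_mul_lt_mul_left hjd)
    refine ⟨0, Multiset.replicate a (m + 1) + Multiset.replicate (m - a) 0, ha0.ne, ?_, ?_, ?_⟩
    · simp only [Multiset.sum_add, Multiset.sum_replicate, smul_eq_mul]
      ring
    · simp only [Multiset.card_add, Multiset.card_replicate]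
      omega
    · simp only [Multiset.mem_cons, Multiset.mem_add, Multiset.mem_replicate]
      rintro i (rfl | ⟨-, rfl⟩ | ⟨-, rfl⟩) <;> assumption

end Polynomial

/-- For any polynomial `p ∈ ℕ[t]` of degree `d ≥ 1` with non-zero constant term there is
`N ≥ 1` such that `p^N` has large middle coefficients. -/
theorem exists_pow_large_middle_coefficients (p : Polynomial ℕ)
    (hd : 1 ≤ p.natDegree) (h0 : p.coeff 0 ≠ 0) :
    ∃ N : ℕ, 1 ≤ N ∧
      (p ^ N).coeff 0 ≠ 0 ∧
      (p ^ N).coeff (N * p.natDegree) ≠ 0 ∧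
      ∀ j : ℕ, 0 < j → j < N * p.natDegree → (p ^ N).coeff j ≠ 1 := by
  have hlead : p.coeff p.natDegree ≠ 0 := leadingCoeff_ne_zero.mpr (by rintro rfl; exact h0 rfl)
  refine ⟨p.natDegree, hd, ?_, coeff_pow_mul_ne_zero hlead _,
    fun j hj0 hjd => coeff_pow_ne_one h0 hlead hj0 hjd⟩
  simpa using coeff_pow_mul_ne_zero h0 p.natDegree
end

section
/- Let p ∈ ℤ[t] be a non-zero polynomial, S the multiplicative submonoid of ℤ[t] generated by t and p, and L a localization of ℤ[t] at S with localization map φ. Then every unit u of L can be written as u = φ(ε) · φ(t)^{k₀} · φ(q₁)^{k₁} ⋯ φ(q_s)^{k_s}, where ε ∈ {1, −1}, k₀, k₁, …, k_s ∈ ℤ, and q₁, …, q_s are prime elements of ℤ[t] each dividing p (so that φ(t) and each φ(q_j) are units of L and their integer powers are well defined). -/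
open Polynomial

/-! A unit of `L` is `φ a / φ s` with `s ∈ S`, so `φ a` is a unit too. Factor `a` into primes in
the UFD `ℤ[t]`: each prime factor `q` becomes a unit in `L`, hence divides some `t ^ n * p ^ m`,
so `q` is either associate to the prime `t` or divides `p`. -/

theorem Subgroup.exists_fin_prod_zpow_of_mem_closure {G : Type*} [CommGroup G] {T : Set G}
    {x : G} (hx : x ∈ closure T) :
    ∃ (s : ℕ) (w : Fin s → G) (k : Fin s → ℤ), (∀ j, w j ∈ T) ∧ x = ∏ j, w j ^ k j := by
  rw [← Subtype.range_coe (s := T), mem_closure_range_iff] at hx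
  obtain ⟨a, rfl⟩ := hx
  let e := a.support.equivFin
  refine ⟨a.support.card, fun j ↦ (e.symm j : T), fun j ↦ a (e.symm j),
    fun j ↦ (e.symm j : T).2, ?_⟩
  rw [Finsupp.prod, ← Finset.prod_coe_sort]
  exact Fintype.prod_equiv e _ _ fun _ ↦ by simp

theorem unit_mem_closure_of_val_eq_map {R L F : Type*}
    [CommMonoidWithZero R] [UniqueFactorizationMonoid R] [CommMonoidWithZero L]
    [FunLike F R L] [MonoidWithZeroHomClass F R L] (f : F) {a : R} {w : Lˣ} (hw : (w : L) = f a) :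
    w ∈ Subgroup.closure {v : Lˣ | ∃ r, (IsUnit r ∨ Prime r) ∧ (v : L) = f r} := by
  induction a using UniqueFactorizationMonoid.induction_on_prime generalizing w with
  | h₁ =>
    have h01 : (0 : L) = 1 := by rw [← w.mul_inv, hw, map_zero, zero_mul]
    rw [show w = 1 from Units.ext (by rw [hw, map_zero, h01, Units.val_one])]
    exact one_mem _
  | h₂ a ha => exact Subgroup.subset_closure ⟨a, .inl ha, hw⟩
  | h₃ a q _ hq ih =>
    obtain ⟨hqu, hau⟩ := IsUnit.mul_iff.mp (map_mul f q a ▸ hw ▸ w.isUnit)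
    rw [show w = hqu.unit * hau.unit from Units.ext (by simp [hw])]
    exact mul_mem (Subgroup.subset_closure ⟨q, .inr hq, hqu.unit_spec⟩) (ih hau.unit_spec)

namespace IsLocalization

variable {R : Type*} [CommRing R] {L : Type*} [CommRing L] [Algebra R L]

theorem unit_mem_closure [UniqueFactorizationMonoid R] (S : Submonoid R)
    [IsLocalization S L] (u : Lˣ) :
    u ∈ Subgroup.closure {v : Lˣ | ∃ r, (IsUnit r ∨ Prime r) ∧ (v : L) = algebraMap R L r} := by
  obtain ⟨⟨a, s⟩, hs⟩ := surj S (u : L)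
  have hsu := map_units L s
  have hnum := unit_mem_closure_of_val_eq_map (algebraMap R L) (w := u * hsu.unit)
    (by rw [Units.val_mul, hsu.unit_spec, hs])
  have hden := unit_mem_closure_of_val_eq_map (algebraMap R L) hsu.unit_spec
  simpa using mul_mem hnum (inv_mem hden)

theorem dvd_or_dvd_of_prime_of_isUnit {a b q : R} [IsLocalization (Submonoid.closure {a, b}) L]
    (hq : Prime q) (hqL : IsUnit (algebraMap R L q)) : q ∣ a ∨ q ∣ b := by
  obtain ⟨m, hm, hqm⟩ := (algebraMap_isUnit_iff (Submonoid.closure {a, b})).mp hqL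
  obtain ⟨i, j, rfl⟩ := (Submonoid.mem_closure_pair a b m).mp hm
  exact (hq.dvd_or_dvd hqm).imp hq.dvd_of_dvd_pow hq.dvd_of_dvd_pow

variable [IsDomain R] {a b : R} [IsLocalization (Submonoid.closure {a, b}) L]

theorem mem_sup_of_prime_or_isUnit (ha : Prime a) (wa : Lˣ) (hwa : (wa : L) = algebraMap R L a)
    {w : Lˣ} {r : R} (hr : IsUnit r ∨ Prime r) (hw : (w : L) = algebraMap R L r) :
    w ∈ (Units.map (algebraMap R L : R →* L)).range ⊔ Subgroup.zpowers wa ⊔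
      Subgroup.closure {v : Lˣ | ∃ q, Prime q ∧ q ∣ b ∧ (v : L) = algebraMap R L q} := by
  rcases hr with hr | hr
  · exact Subgroup.mem_sup_left (Subgroup.mem_sup_left ⟨hr.unit, Units.ext hw.symm⟩)
  rcases dvd_or_dvd_of_prime_of_isUnit (a := a) (b := b) hr (hw ▸ w.isUnit) with hra | hrb
  · obtain ⟨c, hc⟩ := hr.associated_of_dvd ha hra
    have hw' : w = (Units.map (algebraMap R L : R →* L) c)⁻¹ * wa := by
      rw [eq_inv_mul_iff_mul_eq]
      exact Units.ext (by simp [hw, hwa, ← hc, mul_comm])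
    rw [hw']
    exact Subgroup.mem_sup_left (mul_mem (Subgroup.mem_sup_left (inv_mem ⟨c, rfl⟩))
      (Subgroup.mem_sup_right (Subgroup.mem_zpowers wa)))
  · exact Subgroup.mem_sup_right (Subgroup.subset_closure ⟨r, hr, hrb, hw⟩)

end IsLocalization

theorem units_of_laurent_localization_general (p : ℤ[X])
    (S : Submonoid ℤ[X]) (hS : S = Submonoid.closure {X, p})
    (L : Type*) [CommRing L] [Algebra ℤ[X] L] [IsLocalization S L] (u : Lˣ) :
    ∃ (s : ℕ) (ε : ℤˣ) (k₀ : ℤ) (q : Fin s → ℤ[X]) (k : Fin s → ℤ)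
      (wt : Lˣ) (wq : Fin s → Lˣ),
      (wt : L) = algebraMap ℤ[X] L X ∧
      (∀ j, Prime (q j)) ∧
      (∀ j, q j ∣ p) ∧
      (∀ j, (wq j : L) = algebraMap ℤ[X] L (q j)) ∧
      (u : L) = algebraMap ℤ[X] L (C (ε : ℤ)) * ((wt ^ k₀ : Lˣ) : L) *
        ∏ j, ((wq j ^ k j : Lˣ) : L) := by
  subst hS
  have hwt := (IsLocalization.map_units L
    ⟨X, Submonoid.subset_closure (Set.mem_insert X {p})⟩).unit_spec
  have hu := (Subgroup.closure_le _).mpr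
    (by rintro _ ⟨_, hr, hw⟩; exact IsLocalization.mem_sup_of_prime_or_isUnit (b := p) prime_X _ hwt hr hw)
    (IsLocalization.unit_mem_closure (Submonoid.closure {X, p}) u)
  simp only [Subgroup.mem_sup, MonoidHom.mem_range, Subgroup.mem_zpowers_iff] at hu
  obtain ⟨_, ⟨_, ⟨c, rfl⟩, _, ⟨k₀, rfl⟩, rfl⟩, _, hv, rfl⟩ := hu
  obtain ⟨s, wq, k, hwq, rfl⟩ := Subgroup.exists_fin_prod_zpow_of_mem_closure hv
  choose q hq hqp hwq using hwq
  obtain ⟨ε, hε, hεc⟩ := Polynomial.isUnit_iff.mp c.isUnit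
  refine ⟨s, hε.unit, k₀, q, k, _, wq, hwt, hq, hqp, hwq, ?_⟩
  simp [Units.coe_prod, hεc]

/-- Every unit of `ℤ[t, t⁻¹, p(t)⁻¹]` is of the form
`± t^{k₀} · q₁(t)^{k₁} ⋯ q_s(t)^{k_s}` with the `q_j` prime factors of `p`
and `k₀, k₁, …, k_s ∈ ℤ`. -/
theorem units_of_laurent_localization (p : ℤ[X]) (hp0 : p ≠ 0)
    (S : Submonoid ℤ[X]) (hS : S = Submonoid.closure {X, p})
    (L : Type*) [CommRing L] [Algebra ℤ[X] L] [IsLocalization S L] (u : Lˣ) :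
    ∃ (s : ℕ) (ε : ℤˣ) (k₀ : ℤ) (q : Fin s → ℤ[X]) (k : Fin s → ℤ)
      (wt : Lˣ) (wq : Fin s → Lˣ),
      (wt : L) = algebraMap ℤ[X] L X ∧
      (∀ j, Prime (q j)) ∧
      (∀ j, q j ∣ p) ∧
      (∀ j, (wq j : L) = algebraMap ℤ[X] L (q j)) ∧
      (u : L) = algebraMap ℤ[X] L (C (ε : ℤ)) * ((wt ^ k₀ : Lˣ) : L) *
        ∏ j, ((wq j ^ k j : Lˣ) : L) :=
  units_of_laurent_localization_general p S hS L u
end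

section
/- Let p ∈ ℤ[t] be a non-zero polynomial with non-zero constant coefficient, let q₁, …, q_r be pairwise non-associated prime elements of ℤ[t] such that each q_i divides p and every prime element of ℤ[t] dividing p is associated to some q_i, let S be the multiplicative submonoid of ℤ[t] generated by t and p, and let L be a localization of ℤ[t] at S with localization map φ. Then the map ℤˣ × ℤ × ℤ^r → Lˣ sending (ε, k₀, (k₁, …, k_r)) to φ(ε) · φ(t)^{k₀} · φ(q₁)^{k₁} ⋯ φ(q_r)^{k_r} (powers taken in the unit group Lˣ) is a group isomorphism; in particular the unit group of ℤ[t, t⁻¹, p(t)⁻¹] is isomorphic to {±1} × ℤ^{r+1}. -/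
/-!
A unit of `L` is `φ(a) / φ(s)` with `φ(a)` and `φ(s)` units, i.e. with `a` and `s` dividing
elements of `S`. In the UFD `ℤ[t]` every prime divisor of such an element is associated to `t`
or to some `qᵢ`, so `a` and `s` are both of the form `±t^m ∏ qᵢ^{mᵢ}`: this gives surjectivity.
Injectivity is uniqueness of this factorisation (the exponents are the multiplicities of `t` and
the `qᵢ`), after moving negative exponents to the other side.
-/

open Polynomial Function

section UniqueFactorization

variable {R : Type*} [CommMonoidWithZero R] {ι : Type*} [Fintype ι] {π : ι → R}

theorem emultiplicity_units_mul_prod_pow [IsCancelMulZero R] (hπ : ∀ i, Prime (π i))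
    (hππ : Pairwise fun i j ↦ ¬Associated (π i) (π j)) (u : Rˣ) (m : ι → ℕ) (j : ι) :
    emultiplicity (π j) (u * ∏ i, π i ^ m i) = m j := by
  rw [emultiplicity_mul (hπ j), emultiplicity_of_isUnit_right (hπ j).not_isUnit u.isUnit,
    zero_add, Finset.emultiplicity_prod (hπ j), Finset.sum_eq_single j]
  · exact emultiplicity_pow_self_of_prime (hπ j) (m j)
  · intro i _ hij
    have hndvd : ¬π j ∣ π i := fun h ↦ hππ hij.symm ((hπ j).associated_of_dvd (hπ i) h)
    rw [emultiplicity_pow (hπ j), emultiplicity_eq_zero.mpr hndvd, mul_zero]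
  · simp

theorem units_mul_prod_pow_inj [IsCancelMulZero R] [Nontrivial R] (hπ : ∀ i, Prime (π i))
    (hππ : Pairwise fun i j ↦ ¬Associated (π i) (π j)) {u v : Rˣ} {m n : ι → ℕ} :
    u * ∏ i, π i ^ m i = v * ∏ i, π i ^ n i ↔ u = v ∧ m = n := by
  refine ⟨fun h ↦ ?_, by rintro ⟨rfl, rfl⟩; rfl⟩
  obtain rfl : m = n := funext fun j ↦ by
    simpa [emultiplicity_units_mul_prod_pow hπ hππ, h] using
      (emultiplicity_units_mul_prod_pow hπ hππ u m j).symm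
  have hprod : ∏ i, π i ^ m i ≠ 0 :=
    Finset.prod_ne_zero_iff.mpr fun i _ ↦ pow_ne_zero _ (hπ i).ne_zero
  exact ⟨Units.ext (mul_right_cancel₀ hprod h), rfl⟩

theorem prod_pow_add_single [DecidableEq ι] (m : ι → ℕ) (j : ι) :
    ∏ i, π i ^ (m + Pi.single j 1 : ι → ℕ) i = π j * ∏ i, π i ^ m i := by
  simp only [Pi.add_apply, pow_add, Finset.prod_mul_distrib, Pi.single_apply, pow_ite, pow_one,
    pow_zero, Finset.prod_ite_eq', Finset.mem_univ, if_true, mul_comm]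

theorem exists_units_mul_prod_pow_eq [UniqueFactorizationMonoid R] {a : R} (ha : a ≠ 0)
    (h : ∀ z, Prime z → z ∣ a → ∃ i, Associated z (π i)) :
    ∃ (u : Rˣ) (m : ι → ℕ), u * ∏ i, π i ^ m i = a := by
  classical
  induction a using UniqueFactorizationMonoid.induction_on_prime with
  | h₁ => exact absurd rfl ha
  | h₂ a hunit => exact ⟨hunit.unit, 0, by simp⟩
  | h₃ a z _ hz ih =>
    obtain ⟨u, m, rfl⟩ := ih (right_ne_zero_of_mul ha) fun y hy hya ↦
      h y hy (dvd_mul_of_dvd_right hya z)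
    obtain ⟨j, c, hc⟩ := h z hz (dvd_mul_right z _)
    refine ⟨c⁻¹ * u, m + Pi.single j 1, ?_⟩
    rw [prod_pow_add_single, ← hc]
    calc ((c⁻¹ * u : Rˣ) : R) * (z * c * ∏ i, π i ^ m i)
        = z * ((↑c⁻¹ * c) * (u * ∏ i, π i ^ m i)) := by rw [Units.val_mul]; ac_rfl
      _ = z * (u * ∏ i, π i ^ m i) := by rw [Units.inv_mul, one_mul]

end UniqueFactorization

theorem Prime.exists_mem_dvd_of_dvd_mem_closure {M : Type*} [CommMonoidWithZero M] {T : Set M}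
    {z s : M} (hz : Prime z) (hs : s ∈ Submonoid.closure T) (hzs : z ∣ s) : ∃ t ∈ T, z ∣ t := by
  induction hs using Submonoid.closure_induction with
  | mem t ht => exact ⟨t, ht, hzs⟩
  | one => exact absurd (isUnit_of_dvd_one hzs) hz.not_isUnit
  | mul a b _ _ iha ihb => exact (hz.dvd_mul.mp hzs).elim iha ihb

theorem Polynomial.units_map_C_bijective {R : Type*} [CommRing R] [NoZeroDivisors R] :
    Bijective (Units.map (C : R →+* R[X]).toMonoidHom) := by
  refine ⟨fun u v h ↦ Units.ext (C_injective (congrArg Units.val h)), fun u ↦ ?_⟩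
  obtain ⟨r, hr, hru⟩ := isUnit_iff.mp u.isUnit
  exact ⟨hr.unit, Units.ext hru⟩

section Localization

variable {R : Type*} [CommRing R] {S : Submonoid R} {L : Type*} [CommRing L] [Algebra R L]
  {ι : Type*} [Fintype ι]

variable (R L) in
def unitsMulZPowHom (w : ι → Lˣ) : Rˣ × Multiplicative (ι → ℤ) →* Lˣ where
  toFun x := Units.map (algebraMap R L : R →* L) x.1 * ∏ i, w i ^ x.2.toAdd i
  map_one' := by simp
  map_mul' x y := by
    simp only [Prod.fst_mul, Prod.snd_mul, toAdd_mul, Pi.add_apply, zpow_add,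
      Finset.prod_mul_distrib, map_mul]
    exact mul_mul_mul_comm _ _ _ _

variable {π : ι → R} {w : ι → Lˣ}

theorem val_unitsMulZPowHom_natCast (hw : ∀ i, (w i : L) = algebraMap R L (π i)) (u : Rˣ)
    (m : ι → ℕ) :
    (unitsMulZPowHom R L w (u, .ofAdd fun i ↦ (m i : ℤ)) : L) =
      algebraMap R L (u * ∏ i, π i ^ m i) := by
  simp [unitsMulZPowHom, hw]

variable [IsLocalization S L]

theorem unitsMulZPowHom_injective [IsDomain R] (hS : S ≤ nonZeroDivisors R)
    (hπ : ∀ i, Prime (π i)) (hππ : Pairwise fun i j ↦ ¬Associated (π i) (π j))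
    (hw : ∀ i, (w i : L) = algebraMap R L (π i)) : Injective (unitsMulZPowHom R L w) := by
  rw [injective_iff_map_eq_one]
  rintro ⟨u, k⟩ h
  set m : ι → ℕ := fun i ↦ (k.toAdd i).toNat
  set n : ι → ℕ := fun i ↦ (-k.toAdd i).toNat
  have hsplit : ((u, .ofAdd fun i ↦ (m i : ℤ)) : Rˣ × Multiplicative (ι → ℤ)) =
      (u, k) * (1, .ofAdd fun i ↦ (n i : ℤ)) := by
    ext i
    · simp
    · simp only [Prod.mk_mul_mk, mul_one, toAdd_mul, toAdd_ofAdd, Pi.add_apply, m, n]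
      omega
  have hval : algebraMap R L (u * ∏ i, π i ^ m i) =
      algebraMap R L ((1 : Rˣ) * ∏ i, π i ^ n i) := by
    rw [← val_unitsMulZPowHom_natCast hw, ← val_unitsMulZPowHom_natCast hw, hsplit, map_mul, h,
      one_mul]
  obtain ⟨rfl, hmn⟩ := (units_mul_prod_pow_inj hπ hππ).mp (IsLocalization.injective L hS hval)
  ext i
  · rfl
  · have hmni := congrFun hmn i
    simp only [m, n] at hmni
    simp only [Prod.snd_one, toAdd_one, Pi.zero_apply]
    omega

theorem exists_unitsMulZPowHom_eq_algebraMap [IsDomain R] [UniqueFactorizationMonoid R]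
    (hS : S ≤ nonZeroDivisors R)
    (hSπ : ∀ s ∈ S, ∀ z, Prime z → z ∣ s → ∃ i, Associated z (π i))
    (hw : ∀ i, (w i : L) = algebraMap R L (π i)) {a : R} (ha : IsUnit (algebraMap R L a)) :
    ∃ x, (unitsMulZPowHom R L w x : L) = algebraMap R L a := by
  obtain ⟨s, hs, has⟩ := (IsLocalization.algebraMap_isUnit_iff S).mp ha
  have ha0 : a ≠ 0 := by
    rintro rfl
    exact nonZeroDivisors.ne_zero (hS hs) (zero_dvd_iff.mp has)
  obtain ⟨u, m, rfl⟩ :=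
    exists_units_mul_prod_pow_eq ha0 fun z hz hza ↦ hSπ s hs z hz (hza.trans has)
  exact ⟨_, val_unitsMulZPowHom_natCast hw u m⟩

theorem unitsMulZPowHom_surjective [IsDomain R] [UniqueFactorizationMonoid R]
    (hS : S ≤ nonZeroDivisors R)
    (hSπ : ∀ s ∈ S, ∀ z, Prime z → z ∣ s → ∃ i, Associated z (π i))
    (hw : ∀ i, (w i : L) = algebraMap R L (π i)) : Surjective (unitsMulZPowHom R L w) := by
  intro v
  obtain ⟨⟨a, s⟩, h⟩ := IsLocalization.surj S (v : L)
  obtain ⟨x, hx⟩ := exists_unitsMulZPowHom_eq_algebraMap hS hSπ hw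
    (h ▸ v.isUnit.mul (IsLocalization.map_units L s))
  obtain ⟨y, hy⟩ := exists_unitsMulZPowHom_eq_algebraMap hS hSπ hw (IsLocalization.map_units L s)
  refine ⟨x * y⁻¹, ?_⟩
  rw [map_mul, map_inv, mul_inv_eq_iff_eq_mul]
  exact Units.ext (by simp [hx, hy, h])

theorem unitsMulZPowHom_bijective_of_closure_pair [IsDomain R] [UniqueFactorizationMonoid R]
    {t p : R} {q : ι → R} (ht : Prime t) (hp0 : p ≠ 0) (htp : ¬t ∣ p) (hq : ∀ i, Prime (q i))
    (hqd : ∀ i, q i ∣ p) (hqna : Pairwise fun i j ↦ ¬Associated (q i) (q j))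
    (hqall : ∀ z, Prime z → z ∣ p → ∃ i, Associated z (q i))
    [IsLocalization (Submonoid.closure {t, p}) L] {w : Option ι → Lˣ}
    (hw : ∀ o, (w o : L) = algebraMap R L (o.elim t q)) :
    Bijective (unitsMulZPowHom R L w) := by
  have hS : Submonoid.closure {t, p} ≤ nonZeroDivisors R := by
    refine Submonoid.closure_le.mpr ?_
    rintro _ (rfl | rfl)
    exacts [mem_nonZeroDivisors_of_ne_zero ht.ne_zero, mem_nonZeroDivisors_of_ne_zero hp0]
  have hπ : ∀ o : Option ι, Prime (o.elim t q) := by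
    rintro (_ | i)
    exacts [ht, hq i]
  have htq : ∀ i, ¬Associated t (q i) := fun i h ↦ htp (h.dvd.trans (hqd i))
  have hππ : Pairwise fun o o' : Option ι ↦ ¬Associated (o.elim t q) (o'.elim t q) := by
    rintro (_ | i) (_ | j) hij
    exacts [absurd rfl hij, htq j, fun h ↦ htq i h.symm, hqna fun h ↦ hij (congrArg some h)]
  have hSπ : ∀ s ∈ Submonoid.closure {t, p}, ∀ z, Prime z → z ∣ s →
      ∃ o : Option ι, Associated z (o.elim t q) := by
    intro s hs z hz hzs
    obtain ⟨t', ht', hzt'⟩ := hz.exists_mem_dvd_of_dvd_mem_closure hs hzs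
    rcases ht' with rfl | rfl
    · exact ⟨none, hz.associated_of_dvd ht hzt'⟩
    · obtain ⟨i, hi⟩ := hqall z hz hzt'
      exact ⟨some i, hi⟩
  exact ⟨unitsMulZPowHom_injective hS hπ hππ hw, unitsMulZPowHom_surjective hS hSπ hw⟩

end Localization

/-- If `q₁, …, q_r` is a complete system of pairwise non-associated prime divisors of a
non-zero polynomial `p ∈ ℤ[t]` with non-zero constant term, then the map
`ℤˣ × ℤ × ℤ^r → Lˣ`, `(ε, k₀, k) ↦ φ(ε) · φ(t)^{k₀} · ∏ φ(q_i)^{k_i}` is a group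
isomorphism onto the unit group of `L ≅ ℤ[t, t⁻¹, p(t)⁻¹]`. -/
theorem units_of_laurent_localization_iso (p : ℤ[X]) (hp0 : p ≠ 0) (hc0 : p.coeff 0 ≠ 0)
    (r : ℕ) (q : Fin r → ℤ[X])
    (hq : ∀ i, Prime (q i)) (hqd : ∀ i, q i ∣ p)
    (hqna : ∀ i j, i ≠ j → ¬ Associated (q i) (q j))
    (hqall : ∀ z : ℤ[X], Prime z → z ∣ p → ∃ i, Associated z (q i))
    (S : Submonoid ℤ[X]) (hS : S = Submonoid.closure {X, p})
    (L : Type*) [CommRing L] [Algebra ℤ[X] L] [IsLocalization S L]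
    (wt : Lˣ) (hwt : (wt : L) = algebraMap ℤ[X] L X)
    (wq : Fin r → Lˣ) (hwq : ∀ i, (wq i : L) = algebraMap ℤ[X] L (q i))
    (g : ℤˣ × ℤ × (Fin r → ℤ) → Lˣ)
    (hg : ∀ ε k₀ k, ((g (ε, k₀, k) : Lˣ) : L) =
      algebraMap ℤ[X] L (C (ε : ℤ)) * ((wt ^ k₀ : Lˣ) : L) *
        ∏ i, ((wq i ^ k i : Lˣ) : L)) :
    Function.Bijective g ∧
    ∀ (ε ε' : ℤˣ) (k₀ k₀' : ℤ) (k k' : Fin r → ℤ),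
      g (ε * ε', k₀ + k₀', k + k') = g (ε, k₀, k) * g (ε', k₀', k') := by
  subst hS
  let w : Option (Fin r) → Lˣ := fun o ↦ o.elim wt wq
  let e : ℤ × (Fin r → ℤ) ≃+ (Option (Fin r) → ℤ) :=
    (LinearEquiv.piOptionEquivProd ℤ (M := fun _ ↦ ℤ)).symm.toAddEquiv
  have hw : ∀ o, (w o : L) = algebraMap ℤ[X] L (o.elim X q) := by
    rintro (_ | i)
    exacts [hwt, hwq i]
  have hΦ : Bijective (unitsMulZPowHom ℤ[X] L w) :=
    unitsMulZPowHom_bijective_of_closure_pair prime_X hp0 (mt X_dvd_iff.mp hc0) hq hqd hqna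
      hqall hw
  have hge : ∀ ε k₀ k, g (ε, k₀, k) =
      unitsMulZPowHom ℤ[X] L w (Units.map C.toMonoidHom ε, .ofAdd (e (k₀, k))) := by
    intro ε k₀ k
    ext
    rw [hg, mul_assoc]
    simp only [unitsMulZPowHom, MonoidHom.coe_mk, OneHom.coe_mk, Units.val_mul, Units.coe_map,
      Units.coe_prod, Fintype.prod_option]
    rfl
  refine ⟨?_, fun ε ε' k₀ k₀' k k' ↦ ?_⟩
  · have hgΦ : g = unitsMulZPowHom ℤ[X] L w ∘ Prod.map (Units.map C.toMonoidHom) (.ofAdd ∘ e) :=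
      funext fun ⟨ε, k₀, k⟩ ↦ hge ε k₀ k
    rw [hgΦ]
    exact hΦ.comp (units_map_C_bijective.prodMap (Multiplicative.ofAdd.bijective.comp e.bijective))
  · rw [hge, hge, hge, ← map_mul, ← Prod.mk_add_mk, map_add, ofAdd_add, map_mul, Prod.mk_mul_mk]
end

section
/- Let p ∈ ℤ[t] be a non-zero polynomial with non-negative coefficients, S the multiplicative submonoid of ℤ[t] generated by t and p, and L a localization of ℤ[t] at S. Then the set of bounded elements of L is a subring of L: it contains 0 and 1 and is closed under addition, negation and multiplication. -/
open Polynomial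

/-!
Every bounded element is written over a denominator `t^ℓ p^k`, whose coefficients are
non-negative. Multiplying two such representations multiplies the bounds, and for a sum one
brings both to the common denominator `t^(ℓ₁+ℓ₂) p^(k₁+k₂)`, which is legitimate because
multiplying a coefficientwise bound `|q| ≤ m·d` by a polynomial with non-negative coefficients
preserves it.
-/

/-- An element of a localization `L` of `ℤ[t]` at the submonoid generated by `t` and `p`
is *bounded* if it can be written as `φ(q) / φ(t^ℓ p^k)` with
`−m·t^ℓ p^k ≤ q ≤ m·t^ℓ p^k` coefficientwise for some `m`. -/
def IsBddElem (p : ℤ[X]) (L : Type*) [CommRing L] [Algebra ℤ[X] L] (r : L) : Prop :=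
  ∃ (m ℓ k : ℕ) (q : ℤ[X]),
    r * algebraMap ℤ[X] L (X ^ ℓ * p ^ k) = algebraMap ℤ[X] L q ∧
    ∀ i : ℕ, -((m : ℤ) * (X ^ ℓ * p ^ k).coeff i) ≤ q.coeff i ∧
      q.coeff i ≤ (m : ℤ) * (X ^ ℓ * p ^ k).coeff i

lemma Polynomial.X_pow_add_mul_pow_add {R : Type*} [CommSemiring R] (p : R[X]) (ℓ₁ ℓ₂ k₁ k₂ : ℕ) :
    X ^ (ℓ₁ + ℓ₂) * p ^ (k₁ + k₂) = (X ^ ℓ₁ * p ^ k₁) * (X ^ ℓ₂ * p ^ k₂) := by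
  ring

section CoeffNonneg

variable {R : Type*} [Semiring R] [PartialOrder R] [IsOrderedRing R]

lemma Polynomial.coeff_mul_nonneg_s12 {a b : R[X]} (ha : ∀ i, 0 ≤ a.coeff i)
    (hb : ∀ i, 0 ≤ b.coeff i) (i : ℕ) : 0 ≤ (a * b).coeff i := by
  rw [coeff_mul]
  exact Finset.sum_nonneg fun x _ => mul_nonneg (ha _) (hb _)

lemma Polynomial.coeff_pow_nonneg_s12 {a : R[X]} (ha : ∀ i, 0 ≤ a.coeff i) (k : ℕ) (i : ℕ) :
    0 ≤ (a ^ k).coeff i := by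
  induction k generalizing i with
  | zero => rw [pow_zero, coeff_one]; split_ifs <;> simp
  | succ k ih => rw [pow_succ]; exact coeff_mul_nonneg_s12 ih ha i

lemma Polynomial.coeff_X_pow_mul_pow_nonneg {p : R[X]} (hp : ∀ i, 0 ≤ p.coeff i)
    (ℓ k i : ℕ) : 0 ≤ (X ^ ℓ * p ^ k).coeff i := by
  rw [coeff_X_pow_mul']
  split_ifs
  exacts [coeff_pow_nonneg_s12 hp k _, le_rfl]

end CoeffNonneg

section CoeffBounds

variable {R : Type*} [CommRing R] [LinearOrder R] [IsStrictOrderedRing R]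

lemma Polynomial.abs_coeff_mul_le {a b d e : R[X]} {m n : R}
    (ha : ∀ i, |a.coeff i| ≤ m * d.coeff i) (hb : ∀ i, |b.coeff i| ≤ n * e.coeff i) (i : ℕ) :
    |(a * b).coeff i| ≤ m * n * (d * e).coeff i := by
  rw [coeff_mul, coeff_mul, Finset.mul_sum]
  refine (Finset.abs_sum_le_sum_abs _ _).trans (Finset.sum_le_sum fun x _ => ?_)
  calc |a.coeff x.1 * b.coeff x.2| = |a.coeff x.1| * |b.coeff x.2| := abs_mul _ _
    _ ≤ (m * d.coeff x.1) * (n * e.coeff x.2) :=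
        mul_le_mul (ha _) (hb _) (abs_nonneg _) ((abs_nonneg _).trans (ha _))
    _ = m * n * (d.coeff x.1 * e.coeff x.2) := by ring

lemma Polynomial.abs_coeff_mul_add_mul_le {a b d e : R[X]} {m n : R}
    (hd : ∀ i, 0 ≤ d.coeff i) (he : ∀ i, 0 ≤ e.coeff i)
    (ha : ∀ i, |a.coeff i| ≤ m * d.coeff i) (hb : ∀ i, |b.coeff i| ≤ n * e.coeff i) (i : ℕ) :
    |(a * e + b * d).coeff i| ≤ (m + n) * (d * e).coeff i := by
  have self_bound {c : R[X]} (hc : ∀ i, 0 ≤ c.coeff i) (i : ℕ) : |c.coeff i| ≤ 1 * c.coeff i := by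
    rw [one_mul, abs_of_nonneg (hc i)]
  have hae := abs_coeff_mul_le ha (self_bound he) i
  have hbd := abs_coeff_mul_le hb (self_bound hd) i
  rw [mul_comm e] at hbd
  calc |(a * e + b * d).coeff i| ≤ |(a * e).coeff i| + |(b * d).coeff i| := by
        rw [coeff_add]; exact abs_add_le _ _
    _ ≤ (m + n) * (d * e).coeff i := by linarith

end CoeffBounds

namespace IsBddElem

variable {p : ℤ[X]} {L : Type*} [CommRing L] [Algebra ℤ[X] L]

lemma of_abs_coeff_le {r : L} {q : ℤ[X]} (m ℓ k : ℕ)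
    (hr : r * algebraMap ℤ[X] L (X ^ ℓ * p ^ k) = algebraMap ℤ[X] L q)
    (hq : ∀ i, |q.coeff i| ≤ m * (X ^ ℓ * p ^ k).coeff i) : IsBddElem p L r :=
  ⟨m, ℓ, k, q, hr, fun i => abs_le.mp (hq i)⟩

lemma zero : IsBddElem p L 0 :=
  of_abs_coeff_le (q := 0) 0 0 0 (by simp) (by simp)

lemma one : IsBddElem p L 1 :=
  of_abs_coeff_le (q := 1) 1 0 0 (by simp) fun i => by
    rw [pow_zero, pow_zero, one_mul, Nat.cast_one, one_mul, coeff_one]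
    split_ifs <;> simp

lemma neg {a : L} (ha : IsBddElem p L a) : IsBddElem p L (-a) := by
  obtain ⟨m, ℓ, k, q, h, hq⟩ := ha
  refine of_abs_coeff_le (q := -q) m ℓ k (by rw [neg_mul, h, map_neg]) fun i => ?_
  rw [coeff_neg, abs_neg]
  exact abs_le.mpr (hq i)

lemma add (hp : ∀ i, 0 ≤ p.coeff i) {a b : L} (ha : IsBddElem p L a) (hb : IsBddElem p L b) :
    IsBddElem p L (a + b) := by
  obtain ⟨m₁, ℓ₁, k₁, q₁, h₁, hq₁⟩ := ha
  obtain ⟨m₂, ℓ₂, k₂, q₂, h₂, hq₂⟩ := hb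
  set d₁ := (X : ℤ[X]) ^ ℓ₁ * p ^ k₁
  set d₂ := (X : ℤ[X]) ^ ℓ₂ * p ^ k₂
  refine of_abs_coeff_le (q := q₁ * d₂ + q₂ * d₁) (m₁ + m₂) (ℓ₁ + ℓ₂) (k₁ + k₂) ?_ fun i => ?_
  · calc (a + b) * algebraMap ℤ[X] L (X ^ (ℓ₁ + ℓ₂) * p ^ (k₁ + k₂))
        = (a * algebraMap ℤ[X] L d₁) * algebraMap ℤ[X] L d₂
          + (b * algebraMap ℤ[X] L d₂) * algebraMap ℤ[X] L d₁ := by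
          rw [X_pow_add_mul_pow_add, map_mul]; ring
      _ = algebraMap ℤ[X] L (q₁ * d₂ + q₂ * d₁) := by rw [h₁, h₂, ← map_mul, ← map_mul, ← map_add]
  · rw [X_pow_add_mul_pow_add, Nat.cast_add]
    exact abs_coeff_mul_add_mul_le (coeff_X_pow_mul_pow_nonneg hp ℓ₁ k₁)
      (coeff_X_pow_mul_pow_nonneg hp ℓ₂ k₂) (fun j => abs_le.mpr (hq₁ j))
      (fun j => abs_le.mpr (hq₂ j)) i

lemma mul {a b : L} (ha : IsBddElem p L a) (hb : IsBddElem p L b) : IsBddElem p L (a * b) := by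
  obtain ⟨m₁, ℓ₁, k₁, q₁, h₁, hq₁⟩ := ha
  obtain ⟨m₂, ℓ₂, k₂, q₂, h₂, hq₂⟩ := hb
  refine of_abs_coeff_le (q := q₁ * q₂) (m₁ * m₂) (ℓ₁ + ℓ₂) (k₁ + k₂) ?_ fun i => ?_
  · rw [X_pow_add_mul_pow_add, map_mul, mul_mul_mul_comm, h₁, h₂, map_mul]
  · rw [X_pow_add_mul_pow_add, Nat.cast_mul]
    exact abs_coeff_mul_le (fun j => abs_le.mpr (hq₁ j)) (fun j => abs_le.mpr (hq₂ j)) i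

end IsBddElem

theorem isBddElem_subring_general (p : ℤ[X]) (hpc : ∀ i, 0 ≤ p.coeff i)
    (L : Type*) [CommRing L] [Algebra ℤ[X] L] :
    IsBddElem p L (0 : L) ∧
    IsBddElem p L (1 : L) ∧
    (∀ a b : L, IsBddElem p L a → IsBddElem p L b → IsBddElem p L (a + b)) ∧
    (∀ a : L, IsBddElem p L a → IsBddElem p L (-a)) ∧
    (∀ a b : L, IsBddElem p L a → IsBddElem p L b → IsBddElem p L (a * b)) :=
  ⟨.zero, .one, fun _ _ => .add hpc, fun _ => .neg, fun _ _ => .mul⟩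

/-- The bounded elements of `ℤ[t, t⁻¹, p(t)⁻¹]` form a subring. -/
theorem isBddElem_subring (p : ℤ[X]) (hp0 : p ≠ 0) (hpc : ∀ i, 0 ≤ p.coeff i)
    (S : Submonoid ℤ[X]) (hS : S = Submonoid.closure {X, p})
    (L : Type*) [CommRing L] [Algebra ℤ[X] L] [IsLocalization S L] :
    IsBddElem p L (0 : L) ∧
    IsBddElem p L (1 : L) ∧
    (∀ a b : L, IsBddElem p L a → IsBddElem p L b → IsBddElem p L (a + b)) ∧
    (∀ a : L, IsBddElem p L a → IsBddElem p L (-a)) ∧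
    (∀ a b : L, IsBddElem p L a → IsBddElem p L b → IsBddElem p L (a * b)) :=
  isBddElem_subring_general p hpc L
end
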